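/- A nonzero function W(x) = a₁(cos βx − cosh βx) + a₂(sin βx − sinh βx) satisfies the free-end conditions W''(L) = 0 and W'''(L) = 0 for some (a₁,a₂) ≠ (0,0) if and only if cos(βL)·cosh(βL) = −1. -/

import Mathlib

/-!
Writing `c, s, ch, sh` for `cos, sin, cosh, sinh` at `βL`, the free-end conditions
`W''(L) = W'''(L) = 0` are, after dividing out `β²` and `β³`, the linear system
`a₁ (c + ch) + a₂ (s + sh) = 0`, `a₁ (s - sh) - a₂ (c + ch) = 0`.
It has a nontrivial solution iff its determinant `-(c + ch)² - (s² - sh²)` vanishes,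
and by `s² + c² = 1`, `ch² - sh² = 1` that determinant is `-2 (1 + c ch)`.
-/

open Real Matrix

theorem exists_pair_ne_zero_iff {α : Type*} [Zero α] {P : (Fin 2 → α) → Prop} :
    (∃ a₁ a₂ : α, (a₁, a₂) ≠ (0, 0) ∧ P ![a₁, a₂]) ↔ ∃ v ≠ 0, P v := by
  constructor
  · rintro ⟨a₁, a₂, hne, hP⟩
    exact ⟨![a₁, a₂], by simpa using hne, hP⟩
  · rintro ⟨v, hv, hP⟩
    refine ⟨v 0, v 1, ?_, by rwa [← FinVec.etaExpand_eq v] at hP⟩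
    simpa [funext_iff, Fin.forall_fin_two] using hv

section TrigHypComb

variable (β a b c d : ℝ)

noncomputable def trigHypComb (x : ℝ) : ℝ :=
  a * cos (β * x) + b * sin (β * x) + c * cosh (β * x) + d * sinh (β * x)

theorem deriv_trigHypComb :
    deriv (trigHypComb β a b c d) = trigHypComb β (b * β) (-(a * β)) (d * β) (c * β) := by
  funext x
  have hβx : HasDerivAt (fun x : ℝ => β * x) β x := by
    simpa using (hasDerivAt_id x).const_mul β
  have hcos := (hasDerivAt_cos (β * x)).comp x hβx
  have hsin := (hasDerivAt_sin (β * x)).comp x hβx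
  have hcosh := (hasDerivAt_cosh (β * x)).comp x hβx
  have hsinh := (hasDerivAt_sinh (β * x)).comp x hβx
  refine ((((hcos.const_mul a).add (hsin.const_mul b)).add (hcosh.const_mul c)).add
    (hsinh.const_mul d)).deriv.trans ?_
  simp only [trigHypComb]
  ring

end TrigHypComb

noncomputable def freeEndMatrix (θ : ℝ) : Matrix (Fin 2) (Fin 2) ℝ :=
  !![cos θ + cosh θ, sin θ + sinh θ; sin θ - sinh θ, -(cos θ + cosh θ)]

theorem det_freeEndMatrix (θ : ℝ) : (freeEndMatrix θ).det = -2 * (1 + cos θ * cosh θ) := by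
  rw [freeEndMatrix, det_fin_two_of]
  linear_combination -sin_sq_add_cos_sq θ - cosh_sq_sub_sinh_sq θ

theorem free_end_conditions_iff {β : ℝ} (hβ : β ≠ 0) (a₁ a₂ x : ℝ) :
    (iteratedDeriv 2 (fun x => a₁ * (cos (β*x) - cosh (β*x))
        + a₂ * (sin (β*x) - sinh (β*x))) x = 0 ∧
      iteratedDeriv 3 (fun x => a₁ * (cos (β*x) - cosh (β*x))
        + a₂ * (sin (β*x) - sinh (β*x))) x = 0) ↔
    freeEndMatrix (β * x) *ᵥ ![a₁, a₂] = 0 := by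
  have hW : (fun x => a₁ * (cos (β*x) - cosh (β*x)) + a₂ * (sin (β*x) - sinh (β*x))) =
      trigHypComb β a₁ a₂ (-a₁) (-a₂) := by
    funext x; simp only [trigHypComb]; ring
  simp only [hW, iteratedDeriv_succ', iteratedDeriv_zero, deriv_trigHypComb, trigHypComb,
    freeEndMatrix, funext_iff, Fin.forall_fin_two, cons_mulVec, vec2_dotProduct, cons_val_zero,
    cons_val_one, Pi.zero_apply]
  have hβ2 : β ^ 2 ≠ 0 := pow_ne_zero 2 hβ
  have hβ3 : β ^ 3 ≠ 0 := pow_ne_zero 3 hβ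
  constructor
  · rintro ⟨h2, h3⟩
    constructor
    · apply mul_left_cancel₀ hβ2
      linear_combination -h2
    · apply mul_left_cancel₀ hβ3
      linear_combination h3
  · rintro ⟨h2, h3⟩
    constructor
    · linear_combination -β ^ 2 * h2
    · linear_combination β ^ 3 * h3

theorem stmt_3_general (β L : ℝ) (hβ : 0 < β) :
    (∃ a₁ a₂ : ℝ, (a₁, a₂) ≠ (0, 0) ∧
      iteratedDeriv 2 (fun x => a₁ * (Real.cos (β*x) - Real.cosh (β*x))
                        + a₂ * (Real.sin (β*x) - Real.sinh (β*x))) L = 0 ∧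
      iteratedDeriv 3 (fun x => a₁ * (Real.cos (β*x) - Real.cosh (β*x))
                        + a₂ * (Real.sin (β*x) - Real.sinh (β*x))) L = 0)
    ↔ Real.cos (β*L) * Real.cosh (β*L) = -1 := by
  simp only [free_end_conditions_iff hβ.ne']
  rw [exists_pair_ne_zero_iff (P := (freeEndMatrix (β * L) *ᵥ · = 0)),
    exists_mulVec_eq_zero_iff, det_freeEndMatrix]
  constructor <;> intro h <;> linarith

theorem stmt_3 (β L : ℝ) (hβ : 0 < β) (hL : 0 < L) :
    (∃ a₁ a₂ : ℝ, (a₁, a₂) ≠ (0, 0) ∧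
      iteratedDeriv 2 (fun x => a₁ * (Real.cos (β*x) - Real.cosh (β*x))
                        + a₂ * (Real.sin (β*x) - Real.sinh (β*x))) L = 0 ∧
      iteratedDeriv 3 (fun x => a₁ * (Real.cos (β*x) - Real.cosh (β*x))
                        + a₂ * (Real.sin (β*x) - Real.sinh (β*x))) L = 0)
    ↔ Real.cos (β*L) * Real.cosh (β*L) = -1 :=
  stmt_3_general β L hβ
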